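/- Let N ≥ 2 and let a be an integer coprime to N with a² ≡ 1 (mod N). Define f(ε,δ) = Σ_{n=1}^{N−1} φ(n/N − ε) · φ({an/N} − δ) for |ε|, |δ| < 1/N. Then (0,0) is a strict local minimum of f in the quantitative sense: there exist c > 0 and r > 0 such that for all (ε,δ) with 0 < ε² + δ² < r², one has f(ε,δ) ≥ f(0,0) + c(ε² + δ²). -/

import Mathlib

/-- `f(ε,δ) = Σ_{n=1}^{N−1} φ(n/N − ε) · φ({an/N} − δ)` with
`φ(s) = 1 − log(2|sin(πs)|)`; it encodes the change of the energy of the lattice rule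
`X_N = ((n/N, {an/N}))_{n=0}^{N−1}` when the point `(0,0)` is moved to `(ε,δ)`. -/
noncomputable def latticePerturbationEnergy (N : ℕ) (a : ℤ) (ε δ : ℝ) : ℝ :=
  ∑ n ∈ Finset.Ico 1 N,
    (1 - Real.log (2 * |Real.sin (Real.pi * ((n : ℝ) / N - ε))|)) *
      (1 - Real.log (2 * |Real.sin (Real.pi * (Int.fract ((a : ℝ) * n / N) - δ))|))

namespace LPEaux

noncomputable def Phi (s : ℝ) : ℝ := 1 - Real.log (2 * Real.sin (Real.pi * s))
noncomputable def Phi1 (s : ℝ) : ℝ :=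
  -(Real.pi * Real.cos (Real.pi * s)) / Real.sin (Real.pi * s)
noncomputable def LL (s : ℝ) : ℝ := Real.log (Phi s)
noncomputable def LL1 (s : ℝ) : ℝ := Phi1 s / Phi s
noncomputable def LL2 (s : ℝ) : ℝ :=
  (Real.pi ^ 2 / Real.sin (Real.pi * s) ^ 2 * Phi s - Phi1 s ^ 2) / Phi s ^ 2

lemma klog2 : Real.log 2 < 1 := by
  have := Real.log_lt_sub_one_of_pos (show (0:ℝ) < 2 by norm_num) (by norm_num)
  linarith

lemma key_t {t : ℝ} (ht : 0 < t) : (1 - Real.log 2) / 2 ≤ t ^ 2 - Real.log (2 * t) := by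
  have h := Real.log_le_sub_one_of_pos (show (0:ℝ) < 2 * t ^ 2 by positivity)
  have h2 : Real.log (2 * t ^ 2) = Real.log 2 + 2 * Real.log t := by
    rw [Real.log_mul two_ne_zero (by positivity), Real.log_pow]
    push_cast; ring
  have h3 : Real.log (2 * t) = Real.log 2 + Real.log t := by
    rw [Real.log_mul two_ne_zero ht.ne']
  nlinarith

lemma sin_pos_of_Ioo {s : ℝ} (hs : s ∈ Set.Ioo (0:ℝ) 1) : 0 < Real.sin (Real.pi * s) :=
  Real.sin_pos_of_pos_of_lt_pi (by have := hs.1; have := Real.pi_pos; positivity)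
    (by nlinarith [Real.pi_pos, hs.2])

lemma Phi_ge {s : ℝ} (hs : s ∈ Set.Ioo (0:ℝ) 1) : 1 - Real.log 2 ≤ Phi s := by
  have h1 : Real.sin (Real.pi * s) ≤ 1 := Real.sin_le_one _
  have h0 := sin_pos_of_Ioo hs
  have : Real.log (2 * Real.sin (Real.pi * s)) ≤ Real.log 2 :=
    Real.log_le_log (by positivity) (by nlinarith : 2 * Real.sin (Real.pi * s) ≤ 2)
  simp only [Phi]; linarith

lemma Phi_pos {s : ℝ} (hs : s ∈ Set.Ioo (0:ℝ) 1) : 0 < Phi s := by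
  have := Phi_ge hs
  have := klog2
  linarith

lemma hasDerivAt_Phi {s : ℝ} (hsin : Real.sin (Real.pi * s) ≠ 0) :
    HasDerivAt Phi (Phi1 s) s := by
  have hs : HasDerivAt (fun x : ℝ => Real.pi * x) Real.pi s := by
    simpa using (hasDerivAt_id s).const_mul Real.pi
  have hsin' : HasDerivAt (fun x : ℝ => Real.sin (Real.pi * x))
      (Real.cos (Real.pi * s) * Real.pi) s := (Real.hasDerivAt_sin _).comp s hs
  have h2 : HasDerivAt (fun x : ℝ => 2 * Real.sin (Real.pi * x))
      (2 * (Real.cos (Real.pi * s) * Real.pi)) s := hsin'.const_mul 2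
  have hlog := h2.log (by simpa using hsin)
  have := (hasDerivAt_const s (1:ℝ)).sub hlog
  refine this.congr_deriv ?_
  unfold Phi1
  field_simp
  ring

lemma hasDerivAt_Phi1 {s : ℝ} (hsin : Real.sin (Real.pi * s) ≠ 0) :
    HasDerivAt Phi1 (Real.pi ^ 2 / Real.sin (Real.pi * s) ^ 2) s := by
  have hs : HasDerivAt (fun x : ℝ => Real.pi * x) Real.pi s := by
    simpa using (hasDerivAt_id s).const_mul Real.pi
  have hsin' : HasDerivAt (fun x : ℝ => Real.sin (Real.pi * x))
      (Real.cos (Real.pi * s) * Real.pi) s := (Real.hasDerivAt_sin _).comp s hs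
  have hcos' : HasDerivAt (fun x : ℝ => Real.cos (Real.pi * x))
      (-Real.sin (Real.pi * s) * Real.pi) s := (Real.hasDerivAt_cos _).comp s hs
  have hnum : HasDerivAt (fun x : ℝ => -(Real.pi * Real.cos (Real.pi * x)))
      (-(Real.pi * (-Real.sin (Real.pi * s) * Real.pi))) s := (hcos'.const_mul Real.pi).neg
  have := hnum.div hsin' hsin
  refine this.congr_deriv ?_
  have hpy := Real.sin_sq_add_cos_sq (Real.pi * s)
  field_simp
  nlinarith [hpy]

lemma hasDerivAt_LL {s : ℝ} (hsin : Real.sin (Real.pi * s) ≠ 0) (hPhi : Phi s ≠ 0) :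
    HasDerivAt LL (LL1 s) s := (hasDerivAt_Phi hsin).log hPhi

lemma hasDerivAt_LL1 {s : ℝ} (hsin : Real.sin (Real.pi * s) ≠ 0) (hPhi : Phi s ≠ 0) :
    HasDerivAt LL1 (LL2 s) s := by
  have := (hasDerivAt_Phi1 hsin).div (hasDerivAt_Phi hsin) hPhi
  refine this.congr_deriv ?_
  simp [LL2]
  ring

lemma sin_ge_sin {η s : ℝ} (hη : 0 < η) (h1 : η ≤ s) (h2 : s ≤ 1 - η) :
    Real.sin (Real.pi * η) ≤ Real.sin (Real.pi * s) := by
  have hpi := Real.pi_pos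
  have hη2 : η ≤ 1/2 := by linarith
  have mono := Real.strictMonoOn_sin.monotoneOn
  rcases le_or_gt s (1/2) with hs | hs
  · exact mono (by constructor <;> nlinarith) (by constructor <;> nlinarith)
      (by nlinarith)
  · have : Real.sin (Real.pi * s) = Real.sin (Real.pi * (1 - s)) := by
      rw [show Real.pi * (1 - s) = Real.pi - Real.pi * s by ring, Real.sin_pi_sub]
    rw [this]
    exact mono (by constructor <;> nlinarith) (by constructor <;> nlinarith)
      (by nlinarith)

lemma LL2_ge {η s : ℝ} (hη : 0 < η) (hη' : η < 1/2)
    (h1 : η ≤ s) (h2 : s ≤ 1 - η) :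
    Real.pi ^ 2 * ((1 - Real.log 2) / 2) / Phi η ^ 2 ≤ LL2 s := by
  have hsI : s ∈ Set.Ioo (0:ℝ) 1 := ⟨by linarith, by linarith⟩
  have hηI : η ∈ Set.Ioo (0:ℝ) 1 := ⟨hη, by linarith⟩
  set t := Real.sin (Real.pi * s) with htdef
  set c := Real.cos (Real.pi * s) with hcdef
  have ht : 0 < t := sin_pos_of_Ioo hsI
  have ht1 : t ≤ 1 := Real.sin_le_one _
  have hpy : t ^ 2 + c ^ 2 = 1 := Real.sin_sq_add_cos_sq _
  have hP : 0 < Phi s := Phi_pos hsI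
  have hM : 0 < Phi η := Phi_pos hηI
  have hsge : Real.sin (Real.pi * η) ≤ t := sin_ge_sin hη h1 h2
  have hsη : 0 < Real.sin (Real.pi * η) := sin_pos_of_Ioo hηI
  have hPM : Phi s ≤ Phi η := by
    have := Real.log_le_log (by positivity) (by linarith : 2 * Real.sin (Real.pi * η) ≤ 2 * t)
    simp only [Phi]; linarith
  have hkey : (1 - Real.log 2) / 2 ≤ t ^ 2 - Real.log (2 * t) := key_t ht
  have hPc : Phi s - c ^ 2 = t ^ 2 - Real.log (2 * t) := by
    simp only [Phi, ← htdef]; nlinarith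
  have hLL2 : LL2 s = Real.pi ^ 2 * (Phi s - c ^ 2) / (t ^ 2 * Phi s ^ 2) := by
    simp only [LL2, Phi1, ← htdef, ← hcdef]
    field_simp
  rw [hLL2, div_le_div_iff₀ (by positivity) (by positivity)]
  have hpi := Real.pi_pos
  have hk : (0:ℝ) < (1 - Real.log 2) / 2 := by have := klog2; linarith
  have hA : t ^ 2 * Phi s ^ 2 ≤ Phi η ^ 2 := by nlinarith
  have hB : (1 - Real.log 2) / 2 ≤ Phi s - c ^ 2 := by linarith [hPc ▸ hkey]
  nlinarith [mul_le_mul_of_nonneg_left hA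
      (by positivity : (0:ℝ) ≤ Real.pi ^ 2 * ((1 - Real.log 2)/2)),
    mul_le_mul_of_nonneg_right hB (by positivity : (0:ℝ) ≤ Real.pi ^ 2 * Phi η ^ 2)]

lemma LL_strong {η : ℝ} (hη : 0 < η) (hη' : η < 1/2) :
    ∃ m : ℝ, 0 < m ∧ ∀ x t : ℝ, x - t ∈ Set.Icc η (1-η) → x + t ∈ Set.Icc η (1-η) →
      2 * LL x + m * t ^ 2 ≤ LL (x - t) + LL (x + t) := by
  have hηI : η ∈ Set.Ioo (0:ℝ) 1 := ⟨hη, by linarith⟩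
  have hMpos : 0 < Phi η := Phi_pos hηI
  set m : ℝ := Real.pi ^ 2 * ((1 - Real.log 2) / 2) / Phi η ^ 2 with hm
  have hmpos : 0 < m := by
    have h1 := Real.pi_pos
    have h2 := klog2
    have h3 : (0:ℝ) < (1 - Real.log 2) / 2 := by linarith
    rw [hm]
    positivity
  refine ⟨m, hmpos, ?_⟩
  set K : ℝ → ℝ := fun s => LL s - m / 2 * s ^ 2 with hK
  have hIoo : ∀ s : ℝ, s ∈ Set.Icc η (1-η) → s ∈ Set.Ioo (0:ℝ) 1 := fun s hs =>
    ⟨by linarith [hs.1], by linarith [hs.2]⟩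
  have hderiv : ∀ s ∈ Set.Icc η (1-η), HasDerivAt K (LL1 s - m * s) s := by
    intro s hs
    have hsI := hIoo s hs
    have hsin := (sin_pos_of_Ioo hsI).ne'
    have hPhi := (Phi_pos hsI).ne'
    have h1 := hasDerivAt_LL hsin hPhi
    have h2 : HasDerivAt (fun x : ℝ => m / 2 * x ^ 2) (m * s) s := by
      have := (hasDerivAt_pow 2 s).const_mul (m/2)
      simpa using this.congr_deriv (by ring)
    exact h1.sub h2
  have hderiv2 : ∀ s ∈ Set.Icc η (1-η),
      HasDerivAt (fun s => LL1 s - m * s) (LL2 s - m) s := by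
    intro s hs
    have hsI := hIoo s hs
    have h1 := hasDerivAt_LL1 (sin_pos_of_Ioo hsI).ne' (Phi_pos hsI).ne'
    have h2 : HasDerivAt (fun x : ℝ => m * x) m s := by
      simpa using (hasDerivAt_id s).const_mul m
    exact h1.sub h2
  have hint : interior (Set.Icc η (1-η)) = Set.Ioo η (1-η) := interior_Icc
  have hconv : ConvexOn ℝ (Set.Icc η (1-η)) K := by
    apply convexOn_of_hasDerivWithinAt2_nonneg (convex_Icc _ _)
      (f' := fun s => LL1 s - m * s) (f'' := fun s => LL2 s - m)
    · exact fun s hs => ((hderiv s hs).continuousAt).continuousWithinAt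
    · intro s hs
      rw [hint] at hs
      exact ((hderiv s (Set.Ioo_subset_Icc_self hs)).hasDerivWithinAt)
    · intro s hs
      rw [hint] at hs
      exact ((hderiv2 s (Set.Ioo_subset_Icc_self hs)).hasDerivWithinAt)
    · intro s hs
      rw [hint] at hs
      have := LL2_ge hη hη' (le_of_lt hs.1) (le_of_lt hs.2)
      rw [← hm] at this
      linarith
  intro x t hu hw
  have hmid := hconv.2 hu hw (by norm_num : (0:ℝ) ≤ 1/2) (by norm_num : (0:ℝ) ≤ 1/2)
    (by norm_num)
  have hx : (1/2 : ℝ) • (x - t) + (1/2 : ℝ) • (x + t) = x := by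
    simp [smul_eq_mul]; ring
  rw [hx] at hmid
  simp only [hK, smul_eq_mul] at hmid
  nlinarith [hmid]

lemma term_bound {η m : ℝ} (hη : 0 < η) (hη' : η < 1/2) (hm : 0 < m)
    (hstrong : ∀ x t : ℝ, x - t ∈ Set.Icc η (1-η) → x + t ∈ Set.Icc η (1-η) →
      2 * LL x + m * t ^ 2 ≤ LL (x - t) + LL (x + t))
    {x y ε δ : ℝ}
    (hx1 : x - ε ∈ Set.Icc η (1-η)) (hx2 : x + ε ∈ Set.Icc η (1-η))
    (hy1 : y - δ ∈ Set.Icc η (1-η)) (hy2 : y + δ ∈ Set.Icc η (1-η)) :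
    2 * (Phi x * Phi y) + ((1 - Real.log 2) ^ 2 * m) * (ε ^ 2 + δ ^ 2) ≤
      Phi (x - ε) * Phi (y - δ) + Phi (x + ε) * Phi (y + δ) := by
  have hIoo : ∀ s : ℝ, s ∈ Set.Icc η (1-η) → s ∈ Set.Ioo (0:ℝ) 1 := fun s hs =>
    ⟨by linarith [hs.1], by linarith [hs.2]⟩
  have hxI : x ∈ Set.Ioo (0:ℝ) 1 := ⟨by linarith [(hIoo _ hx1).1, (hIoo _ hx2).1],
    by linarith [(hIoo _ hx1).2, (hIoo _ hx2).2]⟩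
  have hyI : y ∈ Set.Ioo (0:ℝ) 1 := ⟨by linarith [(hIoo _ hy1).1, (hIoo _ hy2).1],
    by linarith [(hIoo _ hy1).2, (hIoo _ hy2).2]⟩
  have hs1 := hstrong x ε hx1 hx2
  have hs2 := hstrong y δ hy1 hy2
  have p1 := Phi_pos (hIoo _ hx1); have p2 := Phi_pos (hIoo _ hx2)
  have p3 := Phi_pos (hIoo _ hy1); have p4 := Phi_pos (hIoo _ hy2)
  have px := Phi_pos hxI; have py := Phi_pos hyI
  set F₁ := Phi (x - ε) * Phi (y - δ) with hF₁
  set F₂ := Phi (x + ε) * Phi (y + δ) with hF₂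
  have hF₁p : 0 < F₁ := mul_pos p1 p3
  have hF₂p : 0 < F₂ := mul_pos p2 p4
  set E := Real.exp ((Real.log F₁ + Real.log F₂) / 2) with hE
  have hEp : 0 < E := Real.exp_pos _
  have hE2 : E ^ 2 = F₁ * F₂ := by
    rw [hE, ← Real.exp_nat_mul]
    rw [show (2:ℕ) * ((Real.log F₁ + Real.log F₂) / 2) = Real.log F₁ + Real.log F₂ by
      push_cast; ring]
    rw [Real.exp_add, Real.exp_log hF₁p, Real.exp_log hF₂p]
  have hAM : 2 * E ≤ F₁ + F₂ := by nlinarith [sq_nonneg (F₁ - E)]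
  have hlog1 : Real.log F₁ = LL (x - ε) + LL (y - δ) := Real.log_mul p1.ne' p3.ne'
  have hlog2 : Real.log F₂ = LL (x + ε) + LL (y + δ) := Real.log_mul p2.ne' p4.ne'
  have hmid : LL x + LL y + m / 2 * (ε ^ 2 + δ ^ 2) ≤ (Real.log F₁ + Real.log F₂) / 2 := by
    rw [hlog1, hlog2]; linarith
  have hEl : Phi x * Phi y * Real.exp (m / 2 * (ε ^ 2 + δ ^ 2)) ≤ E := by
    rw [hE]
    calc Phi x * Phi y * Real.exp (m / 2 * (ε ^ 2 + δ ^ 2))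
        = Real.exp (LL x + LL y + m / 2 * (ε ^ 2 + δ ^ 2)) := by
          simp only [LL]; rw [Real.exp_add, Real.exp_add, Real.exp_log px, Real.exp_log py]
      _ ≤ _ := Real.exp_le_exp.2 hmid
  have hexp : 1 + m / 2 * (ε ^ 2 + δ ^ 2) ≤ Real.exp (m / 2 * (ε ^ 2 + δ ^ 2)) := by
    linarith [Real.add_one_le_exp (m / 2 * (ε ^ 2 + δ ^ 2))]
  have hz : 0 ≤ m / 2 * (ε ^ 2 + δ ^ 2) := by positivity
  have hphixy : (1 - Real.log 2) ^ 2 ≤ Phi x * Phi y := by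
    have h1 := Phi_ge hxI; have h2 := Phi_ge hyI
    have hl2 : (0:ℝ) < 1 - Real.log 2 := by linarith [klog2]
    nlinarith
  have hEge : Phi x * Phi y * (1 + m / 2 * (ε ^ 2 + δ ^ 2)) ≤ E := by
    calc Phi x * Phi y * (1 + m / 2 * (ε ^ 2 + δ ^ 2))
        ≤ Phi x * Phi y * Real.exp (m / 2 * (ε ^ 2 + δ ^ 2)) := by
          apply mul_le_mul_of_nonneg_left hexp (by positivity)
      _ ≤ E := hEl
  have h9 : (1 - Real.log 2) ^ 2 * (m * (ε ^ 2 + δ ^ 2)) ≤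
      Phi x * Phi y * (m * (ε ^ 2 + δ ^ 2)) :=
    mul_le_mul_of_nonneg_right hphixy (by positivity)
  have h10 : 2 * (Phi x * Phi y * (1 + m / 2 * (ε ^ 2 + δ ^ 2))) =
      2 * (Phi x * Phi y) + Phi x * Phi y * (m * (ε ^ 2 + δ ^ 2)) := by ring
  have h11 : ((1 - Real.log 2) ^ 2 * m) * (ε ^ 2 + δ ^ 2) =
      (1 - Real.log 2) ^ 2 * (m * (ε ^ 2 + δ ^ 2)) := by ring
  linarith

lemma symm_energy (N : ℕ) (hN : 2 ≤ N) (a : ℤ) (ε δ : ℝ) :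
    latticePerturbationEnergy N a ε δ = latticePerturbationEnergy N a (-ε) (-δ) := by
  have hN0 : (0:ℝ) < N := by positivity
  unfold latticePerturbationEnergy
  refine Finset.sum_bij' (fun n _ => N - n) (fun n _ => N - n) ?_ ?_ ?_ ?_ ?_
  · intro n hn
    simp only [Finset.mem_Ico] at hn ⊢
    omega
  · intro n hn
    simp only [Finset.mem_Ico] at hn ⊢
    omega
  · intro n hn
    simp only [Finset.mem_Ico] at hn
    omega
  · intro n hn
    simp only [Finset.mem_Ico] at hn
    omega
  · intro n hn
    simp only [Finset.mem_Ico] at hn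
    have hcast : ((N - n : ℕ) : ℝ) = (N : ℝ) - n := by
      have : n ≤ N := le_of_lt hn.2
      push_cast [Nat.cast_sub this]; ring
    have hfac1 : Real.sin (Real.pi * (((N - n : ℕ) : ℝ) / N - -ε)) =
        Real.sin (Real.pi * ((n : ℝ) / N - ε)) := by
      rw [hcast]
      rw [show Real.pi * (((N:ℝ) - n) / N - -ε) =
        Real.pi - Real.pi * ((n : ℝ) / N - ε) by field_simp; ring]
      exact Real.sin_pi_sub _
    have hfr : (a : ℝ) * ((N - n : ℕ) : ℝ) / N = (a : ℝ) + -((a:ℝ) * n / N) := by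
      rw [hcast]; field_simp; ring
    have hfract : Int.fract ((a : ℝ) * ((N - n : ℕ) : ℝ) / N) =
        Int.fract (-((a:ℝ) * n / N)) := by
      rw [hfr, Int.fract_intCast_add]
    have hfac2 : |Real.sin (Real.pi * (Int.fract ((a : ℝ) * ((N - n:ℕ) : ℝ) / N) - -δ))| =
        |Real.sin (Real.pi * (Int.fract ((a : ℝ) * n / N) - δ))| := by
      rw [hfract]
      rcases eq_or_ne (Int.fract ((a:ℝ) * n / N)) 0 with h0 | h0
      · rw [Int.fract_neg_eq_zero.2 h0, h0]
        rw [show Real.pi * ((0:ℝ) - -δ) = -(Real.pi * ((0:ℝ) - δ)) by ring, Real.sin_neg,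
          abs_neg]
      · rw [Int.fract_neg h0]
        rw [show Real.pi * (1 - Int.fract ((a:ℝ) * n / N) - -δ) =
          Real.pi - Real.pi * (Int.fract ((a:ℝ) * n / N) - δ) by ring, Real.sin_pi_sub]
    rw [← hfac1, ← hfac2]

lemma fract_bounds (N : ℕ) (hN : 2 ≤ N) (a : ℤ) (ha : Int.gcd a N = 1)
    (n : ℕ) (hn : n ∈ Finset.Ico 1 N) :
    1 / (N:ℝ) ≤ Int.fract ((a : ℝ) * n / N) ∧
      Int.fract ((a : ℝ) * n / N) ≤ 1 - 1 / (N:ℝ) := by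
  simp only [Finset.mem_Ico] at hn
  have hN0 : (0:ℝ) < N := by positivity
  have hNZ : (0:ℤ) < (N:ℤ) := by exact_mod_cast (by omega : 0 < N)
  set A : ℤ := a * n with hA
  set r : ℤ := A % N with hr
  set q : ℤ := A / N with hq
  have hdecomp : (N:ℤ) * q + r = A := Int.mul_ediv_add_emod A N
  have hr0 : 0 ≤ r := Int.emod_nonneg A (by omega)
  have hrN : r < N := Int.emod_lt_of_pos A hNZ
  have hrne : r ≠ 0 := by
    intro h
    have hdvd : (N:ℤ) ∣ A := Int.dvd_of_emod_eq_zero h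
    have hgcd : Int.gcd (N:ℤ) a = 1 := by rwa [Int.gcd_comm]
    have : (N:ℤ) ∣ (n:ℤ) := Int.dvd_of_dvd_mul_right_of_gcd_one hdvd hgcd
    have := Int.le_of_dvd (by exact_mod_cast hn.1) this
    omega
  have hfr : Int.fract ((a : ℝ) * n / N) = (r : ℝ) / N := by
    have hAr : (a : ℝ) * n / N = (q : ℝ) + (r : ℝ) / N := by
      have h1 : ((N:ℤ) * q + r : ℤ) = (A : ℤ) := hdecomp
      have hcast : (N:ℝ) * (q:ℝ) + (r:ℝ) = (a:ℝ) * (n:ℝ) := by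
        exact_mod_cast congrArg (Int.cast : ℤ → ℝ) h1
      field_simp
      linarith
    rw [hAr, Int.fract_intCast_add, Int.fract_eq_self.2 ⟨by positivity, by
      rw [div_lt_one hN0]; exact_mod_cast hrN⟩]
  rw [hfr]
  have h1r : (1:ℝ) ≤ (r:ℝ) := by exact_mod_cast (by omega : (1:ℤ) ≤ r)
  have h2r : (r:ℝ) ≤ (N:ℝ) - 1 := by
    have : (r:ℤ) ≤ (N:ℤ) - 1 := by omega
    exact_mod_cast this
  have hinv : (1/(N:ℝ)) * N = 1 := by field_simp
  constructor
  · rw [div_le_div_iff₀ hN0 hN0]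
    nlinarith
  · rw [div_le_iff₀ hN0]
    nlinarith

end LPEaux

set_option maxHeartbeats 1600000 in
/-- Let `N ≥ 2` and `a` coprime to `N` with `a² ≡ 1 (mod N)`.  Then
`(0,0)` is a strict local minimum of `f` in the quantitative sense: there exist
`c > 0` and `r > 0` such that for all `(ε,δ)` with `0 < ε² + δ² < r²` one has
`f(ε,δ) ≥ f(0,0) + c(ε² + δ²)`. -/
theorem stmt_1 (N : ℕ) (hN : 2 ≤ N) (a : ℤ) (ha : Int.gcd a N = 1)
    (ha2 : Int.ModEq (N : ℤ) (a ^ 2) 1) :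
    ∃ c : ℝ, 0 < c ∧ ∃ r : ℝ, 0 < r ∧ r ≤ 1 / N ∧
      ∀ ε δ : ℝ, 0 < ε ^ 2 + δ ^ 2 → ε ^ 2 + δ ^ 2 < r ^ 2 →
        latticePerturbationEnergy N a ε δ ≥
          latticePerturbationEnergy N a 0 0 + c * (ε ^ 2 + δ ^ 2) := by
  classical
  have hN0 : (0:ℝ) < N := by positivity
  have hN2 : (2:ℝ) ≤ N := by exact_mod_cast hN
  set η : ℝ := 1 / (2 * N) with hηdef
  have hη : 0 < η := by positivity
  have hη' : η < 1/2 := by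
    rw [hηdef, div_lt_div_iff₀ (by positivity) (by norm_num)]
    linarith
  obtain ⟨m, hm, hstrong⟩ := LPEaux.LL_strong hη hη'
  have hklog := LPEaux.klog2
  have hl2 : (0:ℝ) < 1 - Real.log 2 := by linarith
  refine ⟨(1 - Real.log 2) ^ 2 * m / 2, by positivity, η, hη, ?_, ?_⟩
  · rw [hηdef, div_le_div_iff₀ (by positivity) hN0]
    nlinarith
  intro ε δ hpos hlt
  have hε2 : ε ^ 2 < η ^ 2 := by nlinarith [sq_nonneg δ]
  have hδ2 : δ ^ 2 < η ^ 2 := by nlinarith [sq_nonneg ε]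
  have hεu : ε < η := by nlinarith
  have hεl : -η < ε := by nlinarith
  have hδu : δ < η := by nlinarith
  have hδl : -η < δ := by nlinarith
  have h2η : 2 * η = 1 / (N:ℝ) := by rw [hηdef]; field_simp
  -- pointwise bound on each summand
  have habs : ∀ u : ℝ, u ∈ Set.Icc η (1 - η) →
      1 - Real.log (2 * |Real.sin (Real.pi * u)|) = LPEaux.Phi u := by
    intro u hu
    have huI : u ∈ Set.Ioo (0:ℝ) 1 := ⟨by linarith [hu.1], by linarith [hu.2]⟩
    rw [abs_of_pos (LPEaux.sin_pos_of_Ioo huI)]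
    rfl
  have key : ∀ n ∈ Finset.Ico 1 N,
      ((1 - Real.log (2 * |Real.sin (Real.pi * ((n : ℝ) / N - 0))|)) *
        (1 - Real.log (2 * |Real.sin (Real.pi * (Int.fract ((a : ℝ) * n / N) - 0))|))) * 2 +
        ((1 - Real.log 2) ^ 2 * m) * (ε ^ 2 + δ ^ 2) ≤
      ((1 - Real.log (2 * |Real.sin (Real.pi * ((n : ℝ) / N - ε))|)) *
        (1 - Real.log (2 * |Real.sin (Real.pi * (Int.fract ((a : ℝ) * n / N) - δ))|))) +
      ((1 - Real.log (2 * |Real.sin (Real.pi * ((n : ℝ) / N - -ε))|)) *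
        (1 - Real.log (2 * |Real.sin (Real.pi * (Int.fract ((a : ℝ) * n / N) - -δ))|))) := by
    intro n hn
    simp only [Finset.mem_Ico] at hn
    have hn1 : (1:ℝ) ≤ (n:ℝ) := by exact_mod_cast hn.1
    have hx1 : 1 / (N:ℝ) ≤ (n : ℝ) / N := by
      rw [div_le_div_iff₀ hN0 hN0]; nlinarith
    have hnle : (n:ℝ) ≤ (N:ℝ) - 1 := by
      have h' : n + 1 ≤ N := hn.2
      have : ((n:ℝ) + 1) ≤ (N:ℝ) := by exact_mod_cast h'
      linarith
    have hinv : (1/(N:ℝ)) * N = 1 := by field_simp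
    have hx2 : (n : ℝ) / N ≤ 1 - 1 / (N:ℝ) := by
      rw [div_le_iff₀ hN0]
      nlinarith
    obtain ⟨hy1, hy2⟩ := LPEaux.fract_bounds N hN a ha n (Finset.mem_Ico.2 hn)
    rw [← h2η] at hx1 hx2 hy1 hy2
    have mem1 : (n : ℝ) / N - ε ∈ Set.Icc η (1 - η) := ⟨by linarith, by linarith⟩
    have mem2 : (n : ℝ) / N + ε ∈ Set.Icc η (1 - η) := ⟨by linarith, by linarith⟩
    have mem3 : Int.fract ((a : ℝ) * n / N) - δ ∈ Set.Icc η (1 - η) :=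
      ⟨by linarith, by linarith⟩
    have mem4 : Int.fract ((a : ℝ) * n / N) + δ ∈ Set.Icc η (1 - η) :=
      ⟨by linarith, by linarith⟩
    have memx : (n : ℝ) / N ∈ Set.Icc η (1 - η) := ⟨by linarith, by linarith⟩
    have memy : Int.fract ((a : ℝ) * n / N) ∈ Set.Icc η (1 - η) :=
      ⟨by linarith, by linarith⟩
    have hterm := LPEaux.term_bound hη hη' hm hstrong mem1 mem2 mem3 mem4
    rw [show (n : ℝ) / N - -ε = (n : ℝ) / N + ε by ring,
      show Int.fract ((a : ℝ) * n / N) - -δ = Int.fract ((a : ℝ) * n / N) + δ by ring,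
      show (n : ℝ) / N - 0 = (n : ℝ) / N by ring,
      show Int.fract ((a : ℝ) * n / N) - 0 = Int.fract ((a : ℝ) * n / N) by ring,
      habs _ mem1, habs _ mem3, habs _ mem2, habs _ mem4, habs _ memx, habs _ memy]
    linarith
  -- sum it up
  have hsum := Finset.sum_le_sum key
  rw [Finset.sum_add_distrib, Finset.sum_add_distrib, ← Finset.sum_mul,
    Finset.sum_const] at hsum
  have hcard : (N - 1 : ℕ) = (Finset.Ico 1 N).card := by rw [Nat.card_Ico]
  have hcard1 : 1 ≤ (Finset.Ico 1 N).card := by rw [← hcard]; omega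
  have hsymm := LPEaux.symm_energy N hN a ε δ
  have hE0 : latticePerturbationEnergy N a 0 0 =
      ∑ n ∈ Finset.Ico 1 N,
        (1 - Real.log (2 * |Real.sin (Real.pi * ((n : ℝ) / N - 0))|)) *
          (1 - Real.log (2 * |Real.sin (Real.pi * (Int.fract ((a : ℝ) * n / N) - 0))|)) := rfl
  have hEε : latticePerturbationEnergy N a ε δ =
      ∑ n ∈ Finset.Ico 1 N,
        (1 - Real.log (2 * |Real.sin (Real.pi * ((n : ℝ) / N - ε))|)) *
          (1 - Real.log (2 * |Real.sin (Real.pi * (Int.fract ((a : ℝ) * n / N) - δ))|)) := rfl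
  have hEν : latticePerturbationEnergy N a (-ε) (-δ) =
      ∑ n ∈ Finset.Ico 1 N,
        (1 - Real.log (2 * |Real.sin (Real.pi * ((n : ℝ) / N - -ε))|)) *
          (1 - Real.log (2 * |Real.sin (Real.pi * (Int.fract ((a : ℝ) * n / N) - -δ))|)) := rfl
  rw [ge_iff_le]
  have hcardsmul : ((1 - Real.log 2) ^ 2 * m) * (ε ^ 2 + δ ^ 2) ≤
      (Finset.Ico 1 N).card • (((1 - Real.log 2) ^ 2 * m) * (ε ^ 2 + δ ^ 2)) := by
    rw [nsmul_eq_mul]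
    have hnn : (0:ℝ) ≤ ((1 - Real.log 2) ^ 2 * m) * (ε ^ 2 + δ ^ 2) := by positivity
    have : (1:ℝ) ≤ ((Finset.Ico 1 N).card : ℝ) := by exact_mod_cast hcard1
    nlinarith
  have h2f : latticePerturbationEnergy N a 0 0 * 2 +
      ((1 - Real.log 2) ^ 2 * m) * (ε ^ 2 + δ ^ 2) ≤
      latticePerturbationEnergy N a ε δ + latticePerturbationEnergy N a (-ε) (-δ) := by
    rw [hE0, hEε, hEν]
    calc (∑ n ∈ Finset.Ico 1 N,
          (1 - Real.log (2 * |Real.sin (Real.pi * ((n : ℝ) / N - 0))|)) *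
            (1 - Real.log (2 * |Real.sin (Real.pi * (Int.fract ((a : ℝ) * n / N) - 0))|))) * 2 +
          ((1 - Real.log 2) ^ 2 * m) * (ε ^ 2 + δ ^ 2)
        ≤ (∑ n ∈ Finset.Ico 1 N,
          (1 - Real.log (2 * |Real.sin (Real.pi * ((n : ℝ) / N - 0))|)) *
            (1 - Real.log (2 * |Real.sin (Real.pi * (Int.fract ((a : ℝ) * n / N) - 0))|))) * 2 +
          (Finset.Ico 1 N).card • (((1 - Real.log 2) ^ 2 * m) * (ε ^ 2 + δ ^ 2)) := by
          linarith [hcardsmul]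
      _ ≤ _ := hsum
  rw [← hsymm] at h2f
  linarith
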